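/- Let α be a simple root, ρ the half-sum of positive roots, and μ a weight with t := ⟨μ, α∨⟩ ≥ 0. Then the element e^ρ · ∑_{i=0}^{t+1} e^{μ - iα} is fixed by D_α, i.e., D_α(∑_{i=0}^{t+1} e^{ρ + μ - iα}) = ∑_{i=0}^{t+1} e^{ρ + μ - iα}. -/
import Mathlib


open Finset

noncomputable section

variable {Λ : Type*} [AddCommGroup Λ]

/-- `e^l`, the basis element of the group ring `ℤ[Λ]`. -/
def ee (l : Λ) : AddMonoidAlgebra ℤ Λ := AddMonoidAlgebra.single l 1

/-- The reflection `s_α(l) = l - ⟨l, α∨⟩ α` attached to a root `α` with coroot pairing `coroot`. -/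
def refl' (α : Λ) (coroot : Λ →+ ℤ) (l : Λ) : Λ := l - coroot l • α

theorem statement8 (α : Λ) (coroot : Λ →+ ℤ) (h2 : coroot α = 2)
    (D : AddMonoidAlgebra ℤ Λ →ₗ[ℤ] AddMonoidAlgebra ℤ Λ)
    (hreg : ∀ x : AddMonoidAlgebra ℤ Λ, (1 - ee (-α)) * x = 0 → x = 0)
    (hD : ∀ l : Λ, (1 - ee (-α)) * D (ee l) = ee l - ee (refl' α coroot l - α))
    (ρ : Λ) (hρ : coroot ρ = 1) (μ : Λ) (hμ : 0 ≤ coroot μ) :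
    D (∑ i ∈ Finset.range ((coroot μ).toNat + 2), ee (ρ + μ - i • α)) =
      ∑ i ∈ Finset.range ((coroot μ).toNat + 2), ee (ρ + μ - i • α) := by
  set t := (coroot μ).toNat with ht
  have hcμ : coroot μ = (t : ℤ) := (Int.toNat_of_nonneg hμ).symm
  set n := t + 2 with hn
  set f : ℕ → Λ := fun i => ρ + μ - i • α with hf
  have hstep : ∀ i : ℕ, f (i + 1) = f i - α := by
    intro i
    simp only [hf, succ_nsmul]
    abel
  have hrefl : ∀ i ∈ Finset.range n, refl' α coroot (f i) - α = f (n - i) := by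
    intro i hi
    have hi' : i < n := Finset.mem_range.mp hi
    have hc : coroot (f i) = 1 + (t : ℤ) - 2 * i := by
      simp only [hf, map_sub, map_add, hρ, hcμ, AddMonoidHom.map_nsmul, h2, smul_eq_mul]
      ring
    have hcast : ((n - i : ℕ) : ℤ) = (n : ℤ) - i := by omega
    simp only [refl', hc]
    have : (n - i : ℕ) • α = ((n : ℤ) - (i : ℤ)) • α := by
      rw [← hcast, natCast_zsmul]
    simp only [hf]
    rw [this, ← natCast_zsmul α i]
    push_cast [hn]
    match_scalars <;> ring
  -- key computation
  have keyD : (1 - ee (-α)) * D (∑ i ∈ Finset.range n, ee (f i)) = ee (f 0) - ee (f n) := by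
    rw [map_sum, Finset.mul_sum]
    calc ∑ i ∈ Finset.range n, (1 - ee (-α)) * D (ee (f i))
        = ∑ i ∈ Finset.range n, (ee (f i) - ee (f (n - i))) := by
          refine Finset.sum_congr rfl fun i hi => ?_
          rw [hD, hrefl i hi]
      _ = ∑ i ∈ Finset.range n, ee (f i) - ∑ i ∈ Finset.range n, ee (f (n - i)) := by
          rw [Finset.sum_sub_distrib]
      _ = ∑ i ∈ Finset.range n, ee (f i) - ∑ i ∈ Finset.range n, ee (f (i + 1)) := by
          congr 1
          rw [← Finset.sum_range_reflect (fun j => ee (f (j + 1))) n]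
          refine Finset.sum_congr rfl fun i hi => ?_
          have hi' : i < n := Finset.mem_range.mp hi
          congr 2
          omega
      _ = ∑ i ∈ Finset.range n, (ee (f i) - ee (f (i + 1))) := by
          rw [Finset.sum_sub_distrib]
      _ = ee (f 0) - ee (f n) := Finset.sum_range_sub' (fun i => ee (f i)) n
  have keyS : (1 - ee (-α)) * (∑ i ∈ Finset.range n, ee (f i)) = ee (f 0) - ee (f n) := by
    rw [Finset.mul_sum]
    calc ∑ i ∈ Finset.range n, (1 - ee (-α)) * ee (f i)
        = ∑ i ∈ Finset.range n, (ee (f i) - ee (f (i + 1))) := by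
          refine Finset.sum_congr rfl fun i hi => ?_
          rw [sub_mul, one_mul, hstep]
          congr 1
          simp only [ee, AddMonoidAlgebra.single_mul_single, one_mul]
          congr 1
          abel
      _ = ee (f 0) - ee (f n) := Finset.sum_range_sub' (fun i => ee (f i)) n
  have hz := hreg (D (∑ i ∈ Finset.range n, ee (f i)) - ∑ i ∈ Finset.range n, ee (f i))
    (by rw [mul_sub, keyD, keyS, sub_self])
  exact sub_eq_zero.mp hz
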